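/- Let X and Y be first-countable Tychonoff (completely regular Hausdorff) spaces and let E and F be nontrivial real normed vector spaces. If there exists a biseparating map T : C(X,E) → C(Y,F), then X and Y are homeomorphic. -/

import Mathlib

/-!
For `y ∈ Y` call `x ∈ X` a support point of `y` if `T f y ≠ 0` forces `x ∈ tsupport f`.
Every `y` has one: pulling back bumps `g k` shrinking to `y` gives functions `T⁻¹ (g k)` with
nested supports, and if their closed supports had empty intersection one could extract a locally
finite family of disjointly supported functions whose images under `T` are nonzero at points
converging to `y`; a sum of large multiples of them would then have an image that is unbounded
near `y`. Bump functions (complete regularity) show that the support point is unique and depends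
continuously on `y`, and the same construction for `T⁻¹` gives the inverse map.
-/

open Set Function Filter Topology

section Topology

variable {X : Type*} [TopologicalSpace X]

theorem exists_continuousMap_eventuallyEq_one_tsupport_subset [CompletelyRegularSpace X]
    {x : X} {U : Set X} (hU : IsOpen U) (hx : x ∈ U) :
    ∃ φ : C(X, ℝ), φ =ᶠ[𝓝 x] 1 ∧ tsupport φ ⊆ U := by
  obtain ⟨f, hfc, hfx, hfU⟩ := CompletelyRegularSpace.completely_regular_isOpen x U hU hx
  have hf : Continuous fun z => (f z : ℝ) := continuous_subtype_val.comp hfc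
  refine ⟨⟨fun z => min 1 (max 0 (2 - 3 * (f z : ℝ))), by fun_prop⟩, ?_, ?_⟩
  · have hx' : (f x : ℝ) < 1 / 3 := by simp [hfx]
    filter_upwards [(isOpen_lt hf continuous_const).mem_nhds hx'] with z (hz : (f z : ℝ) < 1 / 3)
    simp only [ContinuousMap.coe_mk, Pi.one_apply]
    rw [max_eq_right (by linarith), min_eq_left (by linarith)]
  · have hsupp : support (fun z => min 1 (max 0 (2 - 3 * (f z : ℝ)))) ⊆
        {z | (f z : ℝ) ≤ 2 / 3} := by
      intro z hz
      by_contra hlt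
      simp only [mem_ofPred_eq, not_le] at hlt
      exact hz (by simp only; rw [max_eq_left (by linarith), min_eq_right zero_le_one])
    refine (closure_minimal hsupp (isClosed_le hf continuous_const)).trans fun z hz => ?_
    by_contra hzU
    have : (f z : ℝ) = 1 := by simp [hfU hzU]
    simp only [mem_ofPred_eq] at hz
    linarith

theorem exists_continuousMap_antitone_support_tendsto_smallSets [CompletelyRegularSpace X]
    [FirstCountableTopology X] (x : X) :
    ∃ φ : ℕ → C(X, ℝ), (∀ k, φ k x = 1) ∧ Antitone (fun k => support (φ k)) ∧
      Tendsto (fun k => tsupport (φ k)) atTop (𝓝 x).smallSets := by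
  obtain ⟨B, hB⟩ := (𝓝 x).exists_antitone_basis
  choose κ hκ hκB using fun k => exists_continuousMap_eventuallyEq_one_tsupport_subset
    isOpen_interior (mem_interior_iff_mem_nhds.2 (hB.mem k))
  -- the partial products have nested supports
  refine ⟨fun k => ∏ j ∈ Finset.range (k + 1), κ j, fun k => ?_,
    antitone_nat_of_succ_le fun k => ?_, hB.tendsto_smallSets.smallSets_mono ?_⟩
  · simp [ContinuousMap.prod_apply, fun j => (hκ j).eq_of_nhds]
  · simp only [Finset.prod_range_succ _ (k + 1), ContinuousMap.coe_mul]
    exact support_mul_subset_left _ _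
  · refine Eventually.of_forall fun k => ?_
    simp only [Finset.prod_range_succ, ContinuousMap.coe_mul]
    exact tsupport_mul_subset_right.trans ((hκB k).trans interior_subset)

theorem disjoint_support_smul_of_tsupport_subset_compl {M N : Type*} [Zero M]
    [SMulWithZero ℝ M] [Zero N] {ψ : X → ℝ} {k : X → N} (hψ : tsupport ψ ⊆ (tsupport k)ᶜ)
    (g : X → M) : Disjoint (support (ψ • g)) (support k) :=
  (disjoint_compl_left.mono_left ((support_smul_subset_left ψ g).trans
    ((subset_tsupport ψ).trans hψ))).mono_right (subset_tsupport k)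

theorem ContinuousMap.exists_ne_zero_support_subset_inter [CompletelyRegularSpace X]
    {E : Type*} [NormedAddCommGroup E] [NormedSpace ℝ E] {U : Set X} (hU : IsOpen U) (u : C(X, E))
    (h : (U ∩ support u).Nonempty) : ∃ p : C(X, E), p ≠ 0 ∧ support p ⊆ U ∩ support u := by
  obtain ⟨x, hxU, hxu⟩ := h
  obtain ⟨φ, hφ, hφU⟩ := exists_continuousMap_eventuallyEq_one_tsupport_subset hU hxU
  refine ⟨φ • u, fun h0 => hxu ?_, ?_⟩
  · simpa [hφ.eq_of_nhds] using DFunLike.congr_fun h0 x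
  · rw [ContinuousMap.coe_smul', support_smul]
    exact inter_subset_inter_left _ ((subset_tsupport φ).trans hφU)

theorem ContinuousMap.exists_eqOn_support_of_pairwise_disjoint {ι M : Type*} [TopologicalSpace M]
    [AddCommMonoid M] [ContinuousAdd M] {p : ι → C(X, M)}
    (hdisj : Pairwise (Disjoint on fun i => support (p i)))
    (hlf : LocallyFinite fun i => support (p i)) :
    ∃ Q : C(X, M), ∀ i, EqOn Q (p i) (support (p i)) :=
  ⟨⟨fun x => ∑ᶠ i, p i x, continuous_finsum (fun i => (p i).continuous) hlf⟩, fun i _ hx =>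
    finsum_eq_single _ i fun _ hji => of_not_not fun hj => disjoint_left.1 (hdisj hji) hj hx⟩

theorem exists_pairwise_disjoint_locallyFinite_of_iInter_closure_eq_empty {U : ℕ → Set X}
    (hUo : ∀ k, IsOpen (U k)) (hUne : ∀ k, (U k).Nonempty)
    (hU : ∀ k m, k ≤ m → U m ⊆ closure (U k)) (hempty : ⋂ k, closure (U k) = ∅) :
    ∃ (n : ℕ → ℕ) (G : ℕ → Set X), StrictMono n ∧
      (∀ k, IsOpen (G k) ∧ (G k).Nonempty ∧ G k ⊆ U (n k)) ∧
      Pairwise (Disjoint on G) ∧ LocallyFinite G := by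
  have hescape : ∀ x, ∃ j, x ∉ closure (U j) := by
    simpa [eq_empty_iff_forall_notMem] using hempty
  have hnext : ∀ k, ∃ m, k < m ∧ (U k \ closure (U m)).Nonempty := by
    intro k
    obtain ⟨x, hx⟩ := hUne k
    obtain ⟨j, hj⟩ := hescape x
    exact ⟨max j (k + 1), by omega,
      x, hx, fun h => hj (closure_minimal (hU j _ (le_max_left _ _)) isClosed_closure h)⟩
  choose next hnext_lt hnext_ne using hnext
  set n : ℕ → ℕ := fun j => next^[j] 0
  have hn_succ : ∀ j, n (j + 1) = next (n j) := fun j => iterate_succ_apply' next j 0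
  have hn : StrictMono n := strictMono_nat_of_lt_succ fun j => hn_succ j ▸ hnext_lt (n j)
  refine ⟨n, fun j => U (n j) \ closure (U (n (j + 1))), hn,
    fun j => ⟨(hUo _).sdiff isClosed_closure, by simpa only [hn_succ] using hnext_ne (n j),
      sdiff_subset⟩, ?_, ?_⟩
  · -- a later `U (n j)` lies in the closed set removed from the earlier one
    refine (pairwise_disjoint_on _).2 fun i j hij => disjoint_left.2 fun x hxi hxj => hxi.2 ?_
    exact hU _ _ (hn.monotone hij) hxj.1
  · intro x
    obtain ⟨k, hk⟩ := hescape x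
    refine ⟨(closure (U k))ᶜ, isClosed_closure.isOpen_compl.mem_nhds hk,
      (finite_lt_nat k).subset fun j ⟨z, hzj, hzk⟩ => ?_⟩
    by_contra hkj
    exact hzk (hU k (n j) ((not_lt.1 hkj).trans (hn.id_le j)) hzj.1)

end Topology

theorem disjoint_support_iff_forall_norm_mul_norm_eq_zero {ι E F : Type*} [NormedAddCommGroup E]
    [NormedAddCommGroup F] (f : ι → E) (g : ι → F) :
    Disjoint (support f) (support g) ↔ ∀ i, ‖f i‖ * ‖g i‖ = 0 := by
  simp [disjoint_left, or_iff_not_imp_left]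

section Separating

variable {X Y E F : Type*} [TopologicalSpace X] [TopologicalSpace Y]
  [NormedAddCommGroup E] [NormedAddCommGroup F]

def IsSeparating (T : C(X, E) → C(Y, F)) : Prop :=
  ∀ f g : C(X, E), Disjoint (support f) (support g) → Disjoint (support (T f)) (support (T g))

def IsBiseparating (T : C(X, E) ≃+ C(Y, F)) : Prop :=
  IsSeparating T ∧ IsSeparating T.symm

theorem IsBiseparating.symm {T : C(X, E) ≃+ C(Y, F)} (hT : IsBiseparating T) :
    IsBiseparating T.symm :=
  ⟨hT.2, hT.1⟩

def IsSupportPoint (T : C(X, E) → C(Y, F)) (y : Y) (x : X) : Prop :=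
  ∀ f, y ∈ support (T f) → x ∈ tsupport f

theorem exists_mem_support_apply_of_surjective [Nontrivial F] {T : C(X, E) → C(Y, F)}
    (hT : Surjective T) (y : Y) : ∃ f, y ∈ support (T f) := by
  obtain ⟨e, he⟩ := exists_ne (0 : F)
  obtain ⟨f, hf⟩ := hT (ContinuousMap.const Y e)
  exact ⟨f, by simp [hf, he]⟩

section Additive

variable {G : Type*} [FunLike G C(X, E) C(Y, F)] [AddMonoidHomClass G C(X, E) C(Y, F)] {T : G}

theorem IsSeparating.apply_eq_of_eqOn_support (hT : IsSeparating T) {f g : C(X, E)}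
    (hfg : EqOn f g (support g)) {y : Y} (hy : y ∈ support (T g)) : T f y = T g y := by
  have hdisj : Disjoint (support (f - g)) (support g) :=
    disjoint_left.2 fun x hx hxg => hx (sub_eq_zero.2 (hfg hxg))
  have hy' : T (f - g) y = 0 := of_not_not (disjoint_left.1 (hT _ _ hdisj) · hy)
  rwa [map_sub, ContinuousMap.sub_apply, sub_eq_zero] at hy'

theorem IsSeparating.not_tendsto [NormedSpace ℝ F] (hT : IsSeparating T) {p : ℕ → C(X, E)}
    (hdisj : Pairwise (Disjoint on fun k => support (p k)))
    (hlf : LocallyFinite fun k => support (p k)) {z : ℕ → Y}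
    (hz : ∀ k, z k ∈ support (T (p k))) (y : Y) : ¬ Tendsto z atTop (𝓝 y) := by
  intro hlim
  have hpos : ∀ k, 0 < ‖T (p k) (z k)‖ := fun k => norm_pos_iff.2 (hz k)
  -- `m k` is chosen so that `‖T (m k • p k) (z k)‖ > k`; gluing the `m k • p k` gives `Q`
  choose m hm using fun k : ℕ => exists_nat_gt ((k : ℝ) / ‖T (p k) (z k)‖)
  set q : ℕ → C(X, E) := fun k => m k • p k
  have hq : ∀ k, support (q k) ⊆ support (p k) := fun k => by
    simp only [q, ContinuousMap.coe_nsmul]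
    exact support_smul_subset_right _ _
  obtain ⟨Q, hQ⟩ := ContinuousMap.exists_eqOn_support_of_pairwise_disjoint
    (fun i j hij => (hdisj hij).mono (hq i) (hq j)) (hlf.subset hq)
  have hQ_large : ∀ k : ℕ, (k : ℝ) < ‖T Q (z k)‖ := by
    intro k
    have hq_large : (k : ℝ) < ‖T (q k) (z k)‖ := by
      rw [map_nsmul, ContinuousMap.nsmul_apply, RCLike.norm_nsmul ℝ, nsmul_eq_mul]
      exact (div_lt_iff₀ (hpos k)).1 (hm k)
    rwa [hT.apply_eq_of_eqOn_support (hQ k)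
      (norm_pos_iff.1 ((Nat.cast_nonneg k).trans_lt hq_large))]
  exact not_tendsto_nhds_of_tendsto_atTop
    (tendsto_atTop_mono (fun k => (hQ_large k).le) tendsto_natCast_atTop_atTop) _
    ((continuous_norm.tendsto _).comp (((T Q).continuous.tendsto y).comp hlim))

theorem IsSupportPoint.apply_smul_of_eventuallyEq_one [NormedSpace ℝ E] {y : Y} {x : X}
    (hx : IsSupportPoint T y x) {φ : C(X, ℝ)} (hφ : φ =ᶠ[𝓝 x] 1) (f : C(X, E)) :
    T (φ • f) y = T f y := by
  have hloc : x ∉ tsupport (f - φ • f) := notMem_tsupport_iff_eventuallyEq.2 <| by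
    filter_upwards [hφ] with z hz
    simp [hz]
  have hy : y ∉ support (T (f - φ • f)) := fun hy => hloc (hx _ hy)
  rw [notMem_support, map_sub, ContinuousMap.sub_apply, sub_eq_zero] at hy
  exact hy.symm

theorem IsSupportPoint.unique [T35Space X] [NormedSpace ℝ E] {y : Y} {x₁ x₂ : X}
    (hy : ∃ f, y ∈ support (T f)) (h₁ : IsSupportPoint T y x₁) (h₂ : IsSupportPoint T y x₂) :
    x₁ = x₂ := by
  by_contra hne
  obtain ⟨f, hf⟩ := hy
  obtain ⟨φ, hφ, hφx₂⟩ := exists_continuousMap_eventuallyEq_one_tsupport_subset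
    isOpen_compl_singleton (mem_compl_singleton_iff.2 hne)
  have hx₂ : x₂ ∈ tsupport (φ • f) :=
    h₂ _ (by rwa [mem_support, h₁.apply_smul_of_eventuallyEq_one hφ])
  exact hφx₂ (tsupport_smul_subset_left φ f hx₂) rfl

theorem continuous_of_isSupportPoint [CompletelyRegularSpace X] [NormedSpace ℝ E]
    (hT : ∀ y, ∃ f, y ∈ support (T f)) {σ : Y → X} (hσ : ∀ y, IsSupportPoint T y (σ y)) :
    Continuous σ := by
  refine continuous_iff_continuousAt.2 fun y => (nhds_basis_opens _).tendsto_right_iff.2 ?_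
  rintro U ⟨hσU, hU⟩
  obtain ⟨f, hf⟩ := hT y
  obtain ⟨φ, hφ, hφU⟩ := exists_continuousMap_eventuallyEq_one_tsupport_subset hU hσU
  have hy : y ∈ support (T (φ • f)) := by
    rwa [mem_support, (hσ y).apply_smul_of_eventuallyEq_one hφ]
  filter_upwards [(T (φ • f)).continuous.isOpen_support.mem_nhds hy] with y' hy'
  exact hφU (tsupport_smul_subset_left φ f (hσ y' _ hy'))

end Additive

end Separating

section Biseparating

variable {X Y E F : Type*} [TopologicalSpace X] [TopologicalSpace Y]
  [NormedAddCommGroup E] [NormedAddCommGroup F] {T : C(X, E) ≃+ C(Y, F)}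

theorem IsBiseparating.support_subset_tsupport [CompletelyRegularSpace Y] [NormedSpace ℝ F]
    (hT : IsBiseparating T) {a b : C(X, E)} (hab : support a ⊆ support b) :
    support (T a) ⊆ tsupport (T b) := by
  intro y hy
  by_contra hyb
  obtain ⟨ψ, hψ, hψb⟩ := exists_continuousMap_eventuallyEq_one_tsupport_subset
    (isClosed_tsupport _).isOpen_compl hyb
  have hback := hT.2 (ψ • T a) (T b) (disjoint_support_smul_of_tsupport_subset_compl hψb (T a))
  rw [T.symm_apply_apply] at hback
  have hforth := hT.1 _ _ (hback.mono_right hab)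
  rw [T.apply_symm_apply] at hforth
  exact disjoint_left.1 hforth (by simpa [hψ.eq_of_nhds] using hy) hy

theorem IsSupportPoint.symm [CompletelyRegularSpace Y] [NormedSpace ℝ F] [Nontrivial F]
    (hT : IsBiseparating T) {y : Y} {x : X} (h : IsSupportPoint T y x) :
    IsSupportPoint T.symm x y := by
  intro k hk
  by_contra hyk
  obtain ⟨e, he⟩ := exists_ne (0 : F)
  obtain ⟨ψ, hψ, hψk⟩ := exists_continuousMap_eventuallyEq_one_tsupport_subset
    (isClosed_tsupport _).isOpen_compl hyk
  have hdisj := disjoint_support_smul_of_tsupport_subset_compl hψk (ContinuousMap.const Y e)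
  have hx : x ∈ tsupport (T.symm (ψ • ContinuousMap.const Y e)) :=
    h _ (by simp [hψ.eq_of_nhds, he])
  exact disjoint_left.1 ((hT.2 (ψ • ContinuousMap.const Y e) k hdisj).closure_left
    (T.symm k).continuous.isOpen_support) hx hk

theorem IsBiseparating.nonempty_iInter_tsupport [CompletelyRegularSpace X]
    [CompletelyRegularSpace Y] [NormedSpace ℝ E] [NormedSpace ℝ F] (hT : IsBiseparating T)
    {u : ℕ → C(X, E)} (hu : ∀ k, u k ≠ 0)
    (hnest : ∀ k m, k ≤ m → support (u m) ⊆ tsupport (u k)) {y : Y}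
    (hy : Tendsto (fun k => tsupport (T (u k))) atTop (𝓝 y).smallSets) :
    (⋂ k, tsupport (u k)).Nonempty := by
  by_contra hempty
  obtain ⟨n, G, hn, hG, hdisj, hlf⟩ :=
    exists_pairwise_disjoint_locallyFinite_of_iInter_closure_eq_empty
      (fun k => (u k).continuous.isOpen_support)
      (fun k => support_nonempty_iff.2 (DFunLike.coe_injective.ne (hu k))) hnest (not_nonempty_iff_eq_empty.1 hempty)
  choose p hp0 hpG using fun k => ContinuousMap.exists_ne_zero_support_subset_inter (hG k).1
    (u (n k)) (by rw [inter_eq_left.2 (hG k).2.2]; exact (hG k).2.1)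
  choose z hz using fun k => DFunLike.ne_iff.1 ((map_ne_zero_iff T T.injective).2 (hp0 k))
  refine hT.1.not_tendsto (T := T) (p := p) (fun i j hij => (hdisj hij).mono
    ((hpG i).trans inter_subset_left) ((hpG j).trans inter_subset_left))
    (hlf.subset fun k => (hpG k).trans inter_subset_left) hz y ?_
  exact (hy.comp hn.tendsto_atTop).of_smallSets (Eventually.of_forall fun k =>
    hT.support_subset_tsupport ((hpG k).trans inter_subset_right) (hz k))

theorem IsBiseparating.isSupportPoint_of_mem_iInter_tsupport [CompletelyRegularSpace X]
    [CompletelyRegularSpace Y] [NormedSpace ℝ E] [NormedSpace ℝ F] (hT : IsBiseparating T)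
    {u : ℕ → C(X, E)} {y : Y} (hy : Tendsto (fun k => tsupport (T (u k))) atTop (𝓝 y).smallSets)
    {x : X} (hx : x ∈ ⋂ k, tsupport (u k)) : IsSupportPoint T y x := by
  intro f hf
  by_contra hxf
  obtain ⟨i, hi⟩ :=
    (tendsto_smallSets_iff.1 hy _ ((T f).continuous.isOpen_support.mem_nhds hf)).exists
  obtain ⟨b, hb0, hb⟩ := ContinuousMap.exists_ne_zero_support_subset_inter
    (isClosed_tsupport f).isOpen_compl (u i)
    (mem_closure_iff.1 (mem_iInter.1 hx i) _ (isClosed_tsupport f).isOpen_compl hxf)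
  have hTb : support (T b) ⊆ support (T f) :=
    (hT.support_subset_tsupport (hb.trans inter_subset_right)).trans hi
  have hbf := hT.symm.support_subset_tsupport hTb
  simp only [AddEquiv.symm_apply_apply] at hbf
  exact hb0 (DFunLike.coe_injective (support_eq_empty_iff.1
    (subset_empty_iff.1 fun x hx => (hb hx).1 (hbf hx))))

theorem IsBiseparating.exists_isSupportPoint [CompletelyRegularSpace X] [CompletelyRegularSpace Y]
    [FirstCountableTopology Y] [NormedSpace ℝ E] [NormedSpace ℝ F] [Nontrivial F]
    (hT : IsBiseparating T) (y : Y) : ∃ x, IsSupportPoint T y x := by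
  obtain ⟨e, he⟩ := exists_ne (0 : F)
  obtain ⟨φ, hφy, hφ, hφ_lim⟩ := exists_continuousMap_antitone_support_tendsto_smallSets y
  set g : ℕ → C(Y, F) := fun k => φ k • ContinuousMap.const Y e
  have hg : ∀ k, support (g k) = support (φ k) := fun k => by
    simp [g, ContinuousMap.coe_smul', support_smul, he]
  have hy : Tendsto (fun k => tsupport (T (T.symm (g k)))) atTop (𝓝 y).smallSets := by
    simpa only [AddEquiv.apply_symm_apply, tsupport, hg] using hφ_lim
  have hu : ∀ k, T.symm (g k) ≠ 0 := fun k h => he <| by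
    simpa [g, hφy] using DFunLike.congr_fun (T.symm_apply_eq.1 h) y
  have hnest : ∀ k m, k ≤ m → support (T.symm (g m)) ⊆ tsupport (T.symm (g k)) := fun k m hkm =>
    hT.symm.support_subset_tsupport (by rw [hg, hg]; exact hφ hkm)
  obtain ⟨x, hx⟩ := hT.nonempty_iInter_tsupport hu hnest hy
  exact ⟨x, hT.isSupportPoint_of_mem_iInter_tsupport hy hx⟩

end Biseparating

/-- If `X`, `Y` are first-countable Tychonoff spaces, `E`, `F` nontrivial real
normed spaces, and there exists a biseparating map `T : C(X,E) → C(Y,F)`, then `X` and `Y`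
are homeomorphic. -/
theorem stmt_3 {X Y E F : Type*}
    [TopologicalSpace X] [T35Space X] [FirstCountableTopology X]
    [TopologicalSpace Y] [T35Space Y] [FirstCountableTopology Y]
    [NormedAddCommGroup E] [NormedSpace ℝ E] [Nontrivial E]
    [NormedAddCommGroup F] [NormedSpace ℝ F] [Nontrivial F]
    (T : C(X, E) → C(Y, F))
    (hbij : Function.Bijective T)
    (hadd : ∀ f g : C(X, E), T (f + g) = T f + T g)
    (hsep : ∀ f g : C(X, E), (∀ x, ‖f x‖ * ‖g x‖ = 0) → ∀ y, ‖T f y‖ * ‖T g y‖ = 0)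
    (hsep' : ∀ f g : C(X, E), (∀ y, ‖T f y‖ * ‖T g y‖ = 0) → ∀ x, ‖f x‖ * ‖g x‖ = 0) :
    Nonempty (X ≃ₜ Y) := by
  set T' : C(X, E) ≃+ C(Y, F) := AddEquiv.ofBijective (AddMonoidHom.mk' T hadd) hbij
  have hT : IsBiseparating T' := by
    simp only [IsBiseparating, IsSeparating, disjoint_support_iff_forall_norm_mul_norm_eq_zero]
    have hTT' : ∀ f, T (T'.symm f) = f := T'.apply_symm_apply
    exact ⟨hsep, fun f g hfg => hsep' _ _ (by simpa only [hTT'] using hfg)⟩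
  choose σ hσ using hT.exists_isSupportPoint
  choose τ hτ using hT.symm.exists_isSupportPoint
  have hT_supp := exists_mem_support_apply_of_surjective T'.surjective
  have hT_symm_supp := exists_mem_support_apply_of_surjective T'.symm.surjective
  exact ⟨{ toFun := τ, invFun := σ
           left_inv := fun x => (hσ (τ x)).unique (hT_supp _) ((hτ x).symm hT.symm)
           right_inv := fun y => (hτ (σ y)).unique (hT_symm_supp _) ((hσ y).symm hT)
           continuous_toFun := continuous_of_isSupportPoint hT_symm_supp hτ
           continuous_invFun := continuous_of_isSupportPoint hT_supp hσ }⟩
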